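/- In the same setting, the element H · ∏_{i=0}^{3} ((d-2i)H + i·γ₁) equals d(11d-24)·*. -/

import Mathlib

/-!
Of the four linear factors, the one with `i = 0` is `d • H`, so the class is `d · H² · (cubic in H, γ₁)`.
Since `H⁴ = 0`, only the `H γ₁²` and `γ₁³` terms of the cubic survive, with coefficients
`6(d-2) + 3(d-4) + 2(d-6) = 11d - 36` and `1 · 2 · 3 = 6`; the intersection numbers
`H³γ₁² = *` and `H²γ₁³ = 2*` then give `d(11d - 36 + 12) = d(11d - 24)`.
-/

theorem sq_mul_prod_three_linear_of_pow_four_eq_zero {R : Type*} [CommRing R] {H γ : R}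
    (h4 : H ^ 4 = 0) (a₁ b₁ a₂ b₂ a₃ b₃ : R) :
    H ^ 2 * ((a₁ * H + b₁ * γ) * (a₂ * H + b₂ * γ) * (a₃ * H + b₃ * γ)) =
      (a₁ * b₂ * b₃ + b₁ * a₂ * b₃ + b₁ * b₂ * a₃) * (H ^ 3 * γ ^ 2) +
        b₁ * b₂ * b₃ * (H ^ 2 * γ ^ 3) := by
  linear_combination (a₁ * a₂ * a₃ * H + (a₁ * a₂ * b₃ + a₁ * b₂ * a₃ + b₁ * a₂ * a₃) * γ) * h4

theorem flecnodal_curve_degree_chow_general {R : Type*} [CommRing R]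
    (H γ₁ star : R)
    (h32 : H ^ 3 * γ₁ ^ 2 = star)
    (h23 : H ^ 2 * γ₁ ^ 3 = 2 * star)
    (h4 : H ^ 4 = 0)
    (d : ℤ) :
    H * ∏ i ∈ Finset.range 4, (((d : R) - 2 * (i : ℕ)) * H + (i : ℕ) * γ₁) =
      ((d * (11 * d - 24) : ℤ) : R) * star := by
  calc H * ∏ i ∈ Finset.range 4, (((d : R) - 2 * (i : ℕ)) * H + (i : ℕ) * γ₁)
      = d * (H ^ 2 * (((d - 2) * H + 1 * γ₁) * ((d - 4) * H + 2 * γ₁) *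
          ((d - 6) * H + 3 * γ₁))) := by
        simp only [Finset.prod_range_succ, Finset.prod_range_zero]
        push_cast
        ring
    _ = d * ((11 * d - 36) * (H ^ 3 * γ₁ ^ 2) + 6 * (H ^ 2 * γ₁ ^ 3)) := by
        rw [sq_mul_prod_three_linear_of_pow_four_eq_zero h4]
        ring
    _ = ((d * (11 * d - 24) : ℤ) : R) * star := by
        rw [h32, h23]
        push_cast
        ring

/-- In the Chow ring of the universal line `Φ` over `Gr(1,P³)`, with relations
`H² = γ₁H - γ₂`, `H⁴ = 0` and intersection numbers `H³γ₁² = *`, `H²γ₁³ = 2*`,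
`Hγ₁⁴ = 2*`, one has `H · ∏_{i=0}^{3} ((d-2i)H + iγ₁) = d(11d-24)·*`. -/
theorem flecnodal_curve_degree_chow {R : Type*} [CommRing R]
    (H γ₁ γ₂ star : R)
    (hsq : H ^ 2 = γ₁ * H - γ₂)
    (h32 : H ^ 3 * γ₁ ^ 2 = star)
    (h23 : H ^ 2 * γ₁ ^ 3 = 2 * star)
    (h14 : H * γ₁ ^ 4 = 2 * star)
    (h4 : H ^ 4 = 0)
    (d : ℤ) :
    H * ∏ i ∈ Finset.range 4, (((d : R) - 2 * (i : ℕ)) * H + (i : ℕ) * γ₁) =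
      ((d * (11 * d - 24) : ℤ) : R) * star :=
  flecnodal_curve_degree_chow_general H γ₁ star h32 h23 h4 d
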